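/- If ε : Q → G is an augmented quandle, then the induced map ∂_Q : Adj Q → G, defined on generators by e_q ↦ ε(q), together with the G-action on Adj Q induced by (e_q)^g = e_{q^g}, is a G-crossed module. -/

import Mathlib

/-! AQ1 and the action axioms make `e_q ↦ ε q` and `e_q ↦ e_{q^g}` respect the defining
relations, which gives `δ` and the action. For fixed `a`, the Peiffer identity says that
conjugation by `a` is the action of `δ a`; both are multiplicative in `a`, so it suffices to take
`a = e_p`, and then, both sides being endomorphisms, `c = e_q`, where it is the defining relation
`e_q e_p = e_p e_{q^{ε p}}`. -/

/-- The relations of the adjoint group of an augmented quandle `ε : Q → G`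
with right `G`-action `act`: `e_p e_q = e_q e_{p^{ε q}}`. -/
def adjointRels {Q : Type*} {G : Type*} [Group G] (act : Q → G → Q) (ε : Q → G) :
    Set (FreeGroup Q) :=
  {x | ∃ p q : Q,
    x = FreeGroup.of p * FreeGroup.of q * (FreeGroup.of q * FreeGroup.of (act p (ε q)))⁻¹}

theorem peiffer_identity_of_closure_eq_top {N G : Type*} [Group N] [Group G] (δ : N →* G)
    (A : G → N →* N) (hA_one : A 1 = MonoidHom.id N)
    (hA_mul : ∀ g h, A (g * h) = (A h).comp (A g)) {S : Set N}
    (hS : Subgroup.closure S = ⊤) (hgen : ∀ a ∈ S, ∀ c, c * a = a * A (δ a) c) (a c : N) :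
    c * a = a * A (δ a) c := by
  have hA_apply_inv (g : G) (c : N) : A g (A g⁻¹ c) = c := by
    rw [← MonoidHom.comp_apply, ← hA_mul, inv_mul_cancel, hA_one, MonoidHom.id_apply]
  have ha : a ∈ Subgroup.closure S := hS ▸ Subgroup.mem_top a
  induction ha using Subgroup.closure_induction generalizing c with
  | mem a ha => exact hgen a ha c
  | one => rw [map_one, hA_one, MonoidHom.id_apply, one_mul, mul_one]
  | mul a b _ _ iha ihb =>
    rw [map_mul, hA_mul, MonoidHom.comp_apply, ← mul_assoc, iha, mul_assoc, ihb, mul_assoc]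
  | inv a _ iha =>
    have key := iha (A (δ a)⁻¹ c)
    rw [hA_apply_inv] at key
    rw [map_inv, eq_inv_mul_iff_mul_eq, ← mul_assoc, ← key, mul_inv_cancel_right]

abbrev AdjointGroup {Q G : Type*} [Group G] (act : Q → G → Q) (ε : Q → G) :=
  PresentedGroup (adjointRels act ε)

namespace AdjointGroup

open PresentedGroup

variable {Q G : Type*} [Group G] (act : Q → G → Q) (ε : Q → G)

theorem of_mul_of (p q : Q) :
    (of p * of q : AdjointGroup act ε) = of q * of (act p (ε q)) :=
  mk_eq_mk_of_mul_inv_mem ⟨p, q, rfl⟩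

def boundary (aq1 : ∀ (q : Q) (g : G), ε (act q g) = g⁻¹ * ε q * g) :
    AdjointGroup act ε →* G :=
  toGroup (f := ε) <| by
    rintro r ⟨p, q, rfl⟩
    simp only [map_mul, map_inv, FreeGroup.lift_apply_of, aq1]
    group

def action (act_comp : ∀ (q : Q) (g h : G), act q (g * h) = act (act q g) h)
    (aq1 : ∀ (q : Q) (g : G), ε (act q g) = g⁻¹ * ε q * g) (g : G) :
    AdjointGroup act ε →* AdjointGroup act ε :=
  toGroup (f := fun q => of (act q g)) <| by
    rintro r ⟨p, q, rfl⟩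
    have hconj : act (act p g) (ε (act q g)) = act (act p (ε q)) g := by
      rw [aq1, ← act_comp, ← act_comp, mul_assoc, mul_inv_cancel_left]
    simp only [map_mul, map_inv, FreeGroup.lift_apply_of]
    rw [mul_inv_eq_one, of_mul_of, hconj]

variable (act_comp : ∀ (q : Q) (g h : G), act q (g * h) = act (act q g) h)
  (aq1 : ∀ (q : Q) (g : G), ε (act q g) = g⁻¹ * ε q * g)

@[simp]
theorem boundary_of (q : Q) : boundary act ε aq1 (of q) = ε q :=
  toGroup.of _

@[simp]
theorem action_of (g : G) (q : Q) : action act ε act_comp aq1 g (of q) = of (act q g) :=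
  toGroup.of _

theorem action_one (act_one : ∀ q : Q, act q 1 = q) :
    action act ε act_comp aq1 1 = MonoidHom.id _ :=
  PresentedGroup.ext fun q => by simp [act_one]

theorem action_mul (g h : G) :
    action act ε act_comp aq1 (g * h) =
      (action act ε act_comp aq1 h).comp (action act ε act_comp aq1 g) :=
  PresentedGroup.ext fun q => by simp [act_comp]

theorem boundary_action (g : G) (x : AdjointGroup act ε) :
    boundary act ε aq1 (action act ε act_comp aq1 g x) = g⁻¹ * boundary act ε aq1 x * g := by
  have h : (boundary act ε aq1).comp (action act ε act_comp aq1 g) =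
      (MulAut.conj g⁻¹).toMonoidHom.comp (boundary act ε aq1) :=
    PresentedGroup.ext fun q => by simp [aq1]
  simpa using DFunLike.congr_fun h x

theorem mul_of_eq_of_mul_action (p : Q) (c : AdjointGroup act ε) :
    c * of p = of p * action act ε act_comp aq1 (ε p) c := by
  have h : (MulAut.conj (of p : AdjointGroup act ε)⁻¹).toMonoidHom =
      action act ε act_comp aq1 (ε p) :=
    PresentedGroup.ext fun q => by
      simp only [MulEquiv.coe_toMonoidHom, MulAut.conj_apply, inv_inv, action_of]
      rw [mul_assoc, inv_mul_eq_iff_eq_mul, of_mul_of]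
  rw [← DFunLike.congr_fun h c]
  simp [mul_assoc]

theorem peiffer_identity (act_one : ∀ q : Q, act q 1 = q) (a c : AdjointGroup act ε) :
    c * a = a * action act ε act_comp aq1 (boundary act ε aq1 a) c :=
  peiffer_identity_of_closure_eq_top _ _ (action_one act ε act_comp aq1 act_one)
    (action_mul act ε act_comp aq1) (closure_range_of _)
    (by rintro _ ⟨p, rfl⟩ c; simpa using mul_of_eq_of_mul_action act ε act_comp aq1 p c) a c

end AdjointGroup

open AdjointGroup in
theorem adjoint_group_is_crossed_module {Q G : Type*} [Group G]
    (act : Q → G → Q) (ε : Q → G)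
    (act_one : ∀ q : Q, act q 1 = q)
    (act_comp : ∀ (q : Q) (g h : G), act q (g * h) = act (act q g) h)
    (aq1 : ∀ (q : Q) (g : G), ε (act q g) = g⁻¹ * ε q * g) :
    ∃ (δ : PresentedGroup (adjointRels act ε) →* G)
      (A : PresentedGroup (adjointRels act ε) → G → PresentedGroup (adjointRels act ε)),
      (∀ q : Q, δ (PresentedGroup.of q) = ε q) ∧
      (∀ (q : Q) (g : G), A (PresentedGroup.of q) g = PresentedGroup.of (act q g)) ∧
      (∀ (g : G) (x y : PresentedGroup (adjointRels act ε)), A (x * y) g = A x g * A y g) ∧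
      (∀ x, A x 1 = x) ∧
      (∀ (x : PresentedGroup (adjointRels act ε)) (g h : G), A x (g * h) = A (A x g) h) ∧
      (∀ (x : PresentedGroup (adjointRels act ε)) (g : G), δ (A x g) = g⁻¹ * δ x * g) ∧
      (∀ a c : PresentedGroup (adjointRels act ε), c * a = a * A c (δ a)) :=
  ⟨boundary act ε aq1, fun x g => action act ε act_comp aq1 g x,
    boundary_of act ε aq1,
    fun q g => action_of act ε act_comp aq1 g q,
    fun _ => map_mul _,
    fun x => DFunLike.congr_fun (action_one act ε act_comp aq1 act_one) x,
    fun x g h => DFunLike.congr_fun (action_mul act ε act_comp aq1 g h) x,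
    fun x g => boundary_action act ε act_comp aq1 g x,
    peiffer_identity act ε act_comp aq1 act_one⟩
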